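/- arXiv:math-ph/0204023 — 2 statements merged into one kernel-verified Lean document; each statement's English description precedes it below -/
import Mathlib

section
/- Let H be a complex Hilbert space, D ⊆ H a dense subspace, and λ : A → End(D) a linear map from a unital C*-algebra A into linear operators on D such that λ(ab) = λ(a)λ(b), ⟨λ(a)ψ, φ⟩ = ⟨ψ, λ(a*)φ⟩ for all ψ, φ ∈ D, and |⟨λ(c)ψ, ψ⟩| ≤ ‖c‖·‖ψ‖² for all c ∈ A, ψ ∈ D. Then for every a ∈ A and ψ, φ ∈ D, |⟨λ(a)ψ, φ⟩| ≤ ‖a‖·‖ψ‖·‖φ‖; hence λ(a) extends to a bounded operator on H with ‖λ(a)‖ ≤ ‖a‖. -/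
/-!
Multiplicativity and formal adjointness give `‖λ(a)ψ‖² = ⟨λ(a*a)ψ, ψ⟩`, so the diagonal bound
applied to `c = a*a` together with the C*-identity `‖a*a‖ = ‖a‖²` yields `‖λ(a)ψ‖ ≤ ‖a‖‖ψ‖`.
The off-diagonal bound is then Cauchy–Schwarz, and the bounded operator `λ(a)` on the dense
subspace `D` extends continuously to `H`.
-/

open scoped InnerProductSpace

theorem Submodule.exists_extend_of_dense_of_norm_le {𝕜 E F : Type*} [NontriviallyNormedField 𝕜]
    [NormedAddCommGroup E] [NormedSpace 𝕜 E] [NormedAddCommGroup F] [NormedSpace 𝕜 F]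
    [CompleteSpace F] {D : Submodule 𝕜 E} (hD : Dense (D : Set E)) (f : D →ₗ[𝕜] F) {C : ℝ}
    (hC : 0 ≤ C) (hf : ∀ x : D, ‖f x‖ ≤ C * ‖(x : E)‖) :
    ∃ T : E →L[𝕜] F, ‖T‖ ≤ C ∧ ∀ x : D, T x = f x := by
  have h_dense : DenseRange D.subtype := by simpa [DenseRange] using hD
  exact ⟨f.extendOfNorm D.subtype, LinearMap.opNorm_extendOfNorm_le h_dense hC hf,
    LinearMap.extendOfNorm_eq h_dense ⟨C, hf⟩⟩

section

variable {A H : Type*} [NormedRing A] [StarRing A] [NormedAlgebra ℂ A]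
  [NormedAddCommGroup H] [InnerProductSpace ℂ H] {D : Submodule ℂ H}
  {lam : A →ₗ[ℂ] (D →ₗ[ℂ] D)}

theorem inner_self_apply_eq_inner_star_mul_self_apply
    (hmul : ∀ a b : A, lam (a * b) = (lam a).comp (lam b))
    (hadj : ∀ (a : A) (ψ φ : D), ⟪(lam a ψ : H), (φ : H)⟫_ℂ = ⟪(ψ : H), (lam (star a) φ : H)⟫_ℂ)
    (a : A) (ψ : D) :
    ⟪(lam a ψ : H), (lam a ψ : H)⟫_ℂ = ⟪(lam (star a * a) ψ : H), (ψ : H)⟫_ℂ := by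
  rw [hadj a, ← LinearMap.comp_apply, ← hmul, hadj, star_mul, star_star]

theorem norm_apply_le_of_norm_inner_le [CStarRing A]
    (hmul : ∀ a b : A, lam (a * b) = (lam a).comp (lam b))
    (hadj : ∀ (a : A) (ψ φ : D), ⟪(lam a ψ : H), (φ : H)⟫_ℂ = ⟪(ψ : H), (lam (star a) φ : H)⟫_ℂ)
    (hdiag : ∀ (c : A) (ψ : D), ‖⟪(lam c ψ : H), (ψ : H)⟫_ℂ‖ ≤ ‖c‖ * ‖(ψ : H)‖ ^ 2)
    (a : A) (ψ : D) : ‖(lam a ψ : H)‖ ≤ ‖a‖ * ‖(ψ : H)‖ := by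
  have hsq : ‖(lam a ψ : H)‖ ^ 2 ≤ (‖a‖ * ‖(ψ : H)‖) ^ 2 :=
    calc ‖(lam a ψ : H)‖ ^ 2 = ‖⟪(lam a ψ : H), (lam a ψ : H)⟫_ℂ‖ := by
          rw [inner_self_eq_norm_sq_to_K, norm_pow, RCLike.norm_ofReal, abs_norm]
      _ = ‖⟪(lam (star a * a) ψ : H), (ψ : H)⟫_ℂ‖ := by
          rw [inner_self_apply_eq_inner_star_mul_self_apply hmul hadj]
      _ ≤ ‖star a * a‖ * ‖(ψ : H)‖ ^ 2 := hdiag _ ψ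
      _ = (‖a‖ * ‖(ψ : H)‖) ^ 2 := by rw [CStarRing.norm_star_mul_self]; ring
  exact pow_le_pow_iff_left₀ (norm_nonneg _) (by positivity) two_ne_zero |>.mp hsq

end

theorem stmt_6_general {A H : Type*} [NormedRing A] [StarRing A] [CStarRing A]
    [NormedAlgebra ℂ A]
    [NormedAddCommGroup H] [InnerProductSpace ℂ H] [CompleteSpace H]
    (D : Submodule ℂ H) (hD : Dense (D : Set H))
    (lam : A →ₗ[ℂ] (D →ₗ[ℂ] D))
    (hmul : ∀ a b : A, lam (a * b) = (lam a).comp (lam b))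
    (hadj : ∀ (a : A) (ψ φ : D),
      (inner ℂ ((lam a ψ : D) : H) (φ : H) : ℂ) = inner ℂ (ψ : H) ((lam (star a) φ : D) : H))
    (hdiag : ∀ (c : A) (ψ : D),
      ‖(inner ℂ ((lam c ψ : D) : H) (ψ : H) : ℂ)‖ ≤ ‖c‖ * ‖(ψ : H)‖ ^ 2) :
    (∀ (a : A) (ψ φ : D),
      ‖(inner ℂ ((lam a ψ : D) : H) (φ : H) : ℂ)‖ ≤ ‖a‖ * ‖(ψ : H)‖ * ‖(φ : H)‖) ∧
    (∀ a : A, ∃ T : H →L[ℂ] H, ‖T‖ ≤ ‖a‖ ∧ ∀ ψ : D, T (ψ : H) = ((lam a ψ : D) : H)) := by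
  have hbound := norm_apply_le_of_norm_inner_le hmul hadj hdiag
  refine ⟨fun a ψ φ => ?_, fun a => ?_⟩
  · calc ‖⟪(lam a ψ : H), (φ : H)⟫_ℂ‖ ≤ ‖(lam a ψ : H)‖ * ‖(φ : H)‖ := norm_inner_le_norm _ _
      _ ≤ ‖a‖ * ‖(ψ : H)‖ * ‖(φ : H)‖ := by gcongr; exact hbound a ψ
  · exact Submodule.exists_extend_of_dense_of_norm_le hD (D.subtype ∘ₗ lam a) (norm_nonneg a)
      (hbound a)

/-- A formally *-preserving multiplicative map satisfying the diagonal bound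
extends to bounded operators dominated by the C*-norm. -/
theorem stmt_6 {A H : Type*} [NormedRing A] [StarRing A] [CStarRing A]
    [NormedAlgebra ℂ A] [CompleteSpace A]
    [NormedAddCommGroup H] [InnerProductSpace ℂ H] [CompleteSpace H]
    (D : Submodule ℂ H) (hD : Dense (D : Set H))
    (lam : A →ₗ[ℂ] (D →ₗ[ℂ] D))
    (hmul : ∀ a b : A, lam (a * b) = (lam a).comp (lam b))
    (hadj : ∀ (a : A) (ψ φ : D),
      (inner ℂ ((lam a ψ : D) : H) (φ : H) : ℂ) = inner ℂ (ψ : H) ((lam (star a) φ : D) : H))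
    (hdiag : ∀ (c : A) (ψ : D),
      ‖(inner ℂ ((lam c ψ : D) : H) (ψ : H) : ℂ)‖ ≤ ‖c‖ * ‖(ψ : H)‖ ^ 2) :
    (∀ (a : A) (ψ φ : D),
      ‖(inner ℂ ((lam a ψ : D) : H) (φ : H) : ℂ)‖ ≤ ‖a‖ * ‖(ψ : H)‖ * ‖(φ : H)‖) ∧
    (∀ a : A, ∃ T : H →L[ℂ] H, ‖T‖ ≤ ‖a‖ ∧ ∀ ψ : D, T (ψ : H) = ((lam a ψ : D) : H)) :=
  stmt_6_general D hD lam hmul hadj hdiag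
end

section
/- Let H be a Hilbert space, L self-adjoint on H with e^{itL} a unitary group, Ω a unit vector with LΩ = 0, and J an anti-unitary involution with JΩ = Ω and J e^{itL} = e^{itL} J. Let a, b be bounded operators on H such that J a* Ω = e^{βL/2} a Ω and J b Ω = e^{βL/2} b* Ω (with aΩ, b*Ω in the domain of e^{βL/2}). Then the function F(t) := ⟨e^{itL} a e^{-itL} b Ω, Ω⟩ satisfies F(t) = ⟨e^{itL} e^{βL/2} a Ω, e^{βL/2} b* Ω⟩ for all t ∈ ℝ. -/
open Complex ContinuousLinearMap

theorem ContinuousLinearMap.exp_apply_of_apply_eq_zero {𝕜 E : Type*} [RCLike 𝕜]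
    [NormedAddCommGroup E] [NormedSpace 𝕜 E] [CompleteSpace E] {A : E →L[𝕜] E} {x : E}
    (hx : A x = 0) : NormedSpace.exp A x = x := by
  have hseries := (NormedSpace.exp_series_hasSum_exp' (𝕂 := 𝕜) A).mapL (apply 𝕜 E x)
  have hterms : ∀ n ≠ 0, apply 𝕜 E x ((n.factorial : 𝕜)⁻¹ • A ^ n) = 0 := by
    rintro (_ | m) hm
    · contradiction
    · simp [pow_succ, hx]
  simpa using hseries.unique (hasSum_single 0 hterms)

theorem IsSelfAdjoint.star_exp_smul {𝔸 : Type*} [NormedRing 𝔸] [NormedAlgebra ℂ 𝔸]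
    [StarRing 𝔸] [StarModule ℂ 𝔸] [ContinuousStar 𝔸] {a : 𝔸} (ha : IsSelfAdjoint a) (c : ℂ) :
    star (NormedSpace.exp (c • a)) = NormedSpace.exp (starRingEnd ℂ c • a) := by
  rw [NormedSpace.star_exp, star_smul, ha.star_eq, starRingEnd_apply]

theorem IsSelfAdjoint.adjoint_exp_I_mul_smul {H : Type*} [NormedAddCommGroup H]
    [InnerProductSpace ℂ H] [CompleteSpace H] {L : H →L[ℂ] H} (hL : IsSelfAdjoint L) (t : ℝ) :
    adjoint (NormedSpace.exp ((I * t) • L)) =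
      NormedSpace.exp ((-(I * t)) • L) := by
  rw [← star_eq_adjoint, hL.star_exp_smul, map_mul, conj_I, conj_ofReal,
    neg_mul]

theorem stmt_12_general {H : Type*} [NormedAddCommGroup H] [InnerProductSpace ℂ H]
    [CompleteSpace H]
    (L : H →L[ℂ] H) (hL : IsSelfAdjoint L) (β : ℝ)
    (Ω : H) (hLΩ : L Ω = 0)
    (J : H →ₛₗ[starRingEnd ℂ] H)
    (hJinner : ∀ x y : H, (inner ℂ (J x) (J y) : ℂ) = inner ℂ y x)
    (hJcomm : ∀ (t : ℝ) (x : H),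
      J (NormedSpace.exp ((Complex.I * t) • L) x) =
        NormedSpace.exp ((Complex.I * t) • L) (J x))
    (a b : H →L[ℂ] H)
    (hmod_a : J ((ContinuousLinearMap.adjoint a) Ω) =
      NormedSpace.exp (((β / 2 : ℝ) : ℂ) • L) (a Ω))
    (hmod_b : J (b Ω) =
      NormedSpace.exp (((β / 2 : ℝ) : ℂ) • L) ((ContinuousLinearMap.adjoint b) Ω)) :
    ∀ t : ℝ,
      (inner ℂ (NormedSpace.exp ((Complex.I * t) • L)
          (a (NormedSpace.exp ((-(Complex.I * t)) • L) (b Ω)))) Ω : ℂ) =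
      inner ℂ (NormedSpace.exp ((Complex.I * t) • L)
          (NormedSpace.exp (((β / 2 : ℝ) : ℂ) • L) (a Ω)))
        (NormedSpace.exp (((β / 2 : ℝ) : ℂ) • L) ((ContinuousLinearMap.adjoint b) Ω)) := by
  intro t
  set U := NormedSpace.exp ((I * t) • L)
  set U' := NormedSpace.exp ((-(I * t)) • L)
  set M := NormedSpace.exp (((β / 2 : ℝ) : ℂ) • L)
  have hU : adjoint U = U' := hL.adjoint_exp_I_mul_smul t
  have hU'Ω : U' Ω = Ω :=
    exp_apply_of_apply_eq_zero (by simp [hLΩ])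
  have hJU' : J (U' (b Ω)) = U' (J (b Ω)) := by
    simpa [U'] using hJcomm (-t) (b Ω)
  calc inner ℂ (U (a (U' (b Ω)))) Ω
      = inner ℂ (U' (b Ω)) (adjoint a (adjoint U Ω)) := by
        rw [adjoint_inner_right, adjoint_inner_right]
    _ = inner ℂ (J (adjoint a Ω)) (J (U' (b Ω))) := by
        rw [hU, hU'Ω, hJinner]
    _ = inner ℂ (M (a Ω)) (U' (M (adjoint b Ω))) := by rw [hmod_a, hJU', hmod_b]
    _ = inner ℂ (U (M (a Ω))) (M (adjoint b Ω)) := by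
        rw [← hU, adjoint_inner_right]

/-- Algebraic core of the real-time KMS condition via modular data. -/
theorem stmt_12 {H : Type*} [NormedAddCommGroup H] [InnerProductSpace ℂ H]
    [CompleteSpace H]
    (L : H →L[ℂ] H) (hL : IsSelfAdjoint L) (β : ℝ) (hβ : 0 < β)
    (Ω : H) (hΩnorm : ‖Ω‖ = 1) (hLΩ : L Ω = 0)
    (J : H →ₛₗ[starRingEnd ℂ] H)
    (hJJ : ∀ x : H, J (J x) = x)
    (hJinner : ∀ x y : H, (inner ℂ (J x) (J y) : ℂ) = inner ℂ y x)
    (hJΩ : J Ω = Ω)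
    (hJcomm : ∀ (t : ℝ) (x : H),
      J (NormedSpace.exp ((Complex.I * t) • L) x) =
        NormedSpace.exp ((Complex.I * t) • L) (J x))
    (a b : H →L[ℂ] H)
    (hmod_a : J ((ContinuousLinearMap.adjoint a) Ω) =
      NormedSpace.exp (((β / 2 : ℝ) : ℂ) • L) (a Ω))
    (hmod_b : J (b Ω) =
      NormedSpace.exp (((β / 2 : ℝ) : ℂ) • L) ((ContinuousLinearMap.adjoint b) Ω)) :
    ∀ t : ℝ,
      (inner ℂ (NormedSpace.exp ((Complex.I * t) • L)
          (a (NormedSpace.exp ((-(Complex.I * t)) • L) (b Ω)))) Ω : ℂ) =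
      inner ℂ (NormedSpace.exp ((Complex.I * t) • L)
          (NormedSpace.exp (((β / 2 : ℝ) : ℂ) • L) (a Ω)))
        (NormedSpace.exp (((β / 2 : ℝ) : ℂ) • L) ((ContinuousLinearMap.adjoint b) Ω)) :=
  stmt_12_general L hL β Ω hLΩ J hJinner hJcomm a b hmod_a hmod_b
end
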